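/- Let p, q, q' be real numbers with 0 < p < 1/2 and 1 - p ≤ q' < q < 1. Then 1 ≤ FPR_s(p,q)/FPR_r(p,q) and this ratio is increasing in q, i.e., FPR_s(p,q')/FPR_r(p,q') ≤ FPR_s(p,q)/FPR_r(p,q); furthermore FNR_s(p,q)/FNR_r(p,q) = (1 - 2·p)/(q - p), which satisfies (1 - 2·p)/(1 - p) ≤ FNR_s(p,q)/FNR_r(p,q) ≤ 1 and is decreasing in q, i.e., FNR_s(p,q)/FNR_r(p,q) ≤ FNR_s(p,q')/FNR_r(p,q'). -/

import Mathlib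

/-- The revealing school's false positive rate. -/
noncomputable def FPR_r (p q : ℝ) : ℝ := 1 - q

/-- The revealing school's false negative rate. -/
noncomputable def FNR_r (p q : ℝ) : ℝ := 1 - q

/-- The strategic school's false positive rate. -/
noncomputable def FPR_s (p q : ℝ) : ℝ := 1 - q + q * (p + q - 1) / (q - p)

/-- The strategic school's false negative rate. -/
noncomputable def FNR_s (p q : ℝ) : ℝ := (1 - q) * (1 - 2 * p) / (q - p)

/-!
Write `FPR_s = FPR_r + fprExcess`. Division by `q - p` gives
`fprExcess p q = q + 2p - 1 - p (1 - 2p) / (q - p)`, which is increasing in `q > p`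
because `p (1 - 2p) ≥ 0`, and nonnegative once `q ≥ 1 - p`. Hence
`FPR_s / FPR_r = 1 + fprExcess / (1 - q)` is at least `1` and increasing on `[1 - p, 1)`.
The false negative rates share the factor `1 - q`, so their ratio is `(1 - 2p) / (q - p)`.
-/

noncomputable def fprExcess (p q : ℝ) : ℝ := q * (p + q - 1) / (q - p)

section

variable {p q : ℝ}

theorem FPR_s_eq_FPR_r_add_fprExcess : FPR_s p q = FPR_r p q + fprExcess p q := rfl

theorem fprExcess_nonneg (hpq : p < q) (hq : 1 - p ≤ q) : 0 ≤ fprExcess p q := by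
  unfold fprExcess
  have : 0 ≤ q := by linarith
  have : 0 ≤ p + q - 1 := by linarith
  have : 0 < q - p := by linarith
  positivity

theorem fprExcess_eq (hpq : q ≠ p) :
    fprExcess p q = q + 2 * p - 1 - p * (1 - 2 * p) / (q - p) := by
  have : q - p ≠ 0 := sub_ne_zero.mpr hpq
  unfold fprExcess
  field_simp
  ring

theorem fprExcess_monotoneOn (hp0 : 0 ≤ p) (hp : p ≤ 1 / 2) :
    MonotoneOn (fprExcess p) (Set.Ioi p) := by
  intro a ha b hb hab
  have ha' : 0 < a - p := sub_pos.mpr ha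
  have : 0 ≤ p * (1 - 2 * p) := mul_nonneg hp0 (by linarith)
  rw [fprExcess_eq (ne_of_gt ha), fprExcess_eq (ne_of_gt hb)]
  gcongr

theorem FPR_s_div_FPR_r (hq : q ≠ 1) :
    FPR_s p q / FPR_r p q = 1 + fprExcess p q / (1 - q) := by
  have : 1 - q ≠ 0 := sub_ne_zero.mpr hq.symm
  rw [FPR_s_eq_FPR_r_add_fprExcess, FPR_r, add_div, div_self this]

theorem one_le_FPR_s_div_FPR_r (hp : p < 1 / 2) (hq1 : 1 - p ≤ q) (hq : q < 1) :
    1 ≤ FPR_s p q / FPR_r p q := by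
  rw [FPR_s_div_FPR_r hq.ne]
  have := fprExcess_nonneg (by linarith) hq1
  have : 0 < 1 - q := by linarith
  simp only [le_add_iff_nonneg_right]
  positivity

theorem FPR_s_div_FPR_r_monotoneOn (hp0 : 0 ≤ p) (hp : p < 1 / 2) :
    MonotoneOn (fun q ↦ FPR_s p q / FPR_r p q) (Set.Ico (1 - p) 1) := by
  rintro a ⟨ha1, ha⟩ b ⟨hb1, hb⟩ hab
  have hexcess : fprExcess p a ≤ fprExcess p b :=
    fprExcess_monotoneOn hp0 hp.le (show p < a by linarith) (show p < b by linarith) hab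
  have := fprExcess_nonneg (show p < b by linarith) hb1
  have : 0 < 1 - b := by linarith
  simp only [FPR_s_div_FPR_r ha.ne, FPR_s_div_FPR_r hb.ne]
  gcongr

theorem FNR_s_div_FNR_r (hq : q ≠ 1) :
    FNR_s p q / FNR_r p q = (1 - 2 * p) / (q - p) := by
  have : 1 - q ≠ 0 := sub_ne_zero.mpr hq.symm
  unfold FNR_s FNR_r
  field_simp

end

/-- For noisy grades (q < 1): the FPR ratio of strategic to revealing is at
least 1 and increasing in q; the FNR ratio equals (1-2p)/(q-p), lies in
[(1-2p)/(1-p), 1], and is decreasing in q. -/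
theorem rate_ratios_noisy_grades (p q q' : ℝ) (hp0 : 0 < p) (hp : p < 1/2)
    (hq'1 : 1 - p ≤ q') (hq' : q' < q) (hq2 : q < 1) :
    (1 ≤ FPR_s p q / FPR_r p q ∧
      FPR_s p q' / FPR_r p q' ≤ FPR_s p q / FPR_r p q) ∧
    (FNR_s p q / FNR_r p q = (1 - 2 * p) / (q - p) ∧
      (1 - 2 * p) / (1 - p) ≤ FNR_s p q / FNR_r p q ∧
      FNR_s p q / FNR_r p q ≤ 1 ∧
      FNR_s p q / FNR_r p q ≤ FNR_s p q' / FNR_r p q') := by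
  have hq'_mem : q' ∈ Set.Ico (1 - p) 1 := ⟨hq'1, by linarith⟩
  have hq_mem : q ∈ Set.Ico (1 - p) 1 := ⟨by linarith, hq2⟩
  have h2p : 0 ≤ 1 - 2 * p := by linarith
  have hq'p : 0 < q' - p := by linarith
  rw [FNR_s_div_FNR_r hq2.ne, FNR_s_div_FNR_r hq'_mem.2.ne]
  refine ⟨⟨one_le_FPR_s_div_FPR_r hp hq_mem.1 hq2,
    FPR_s_div_FPR_r_monotoneOn hp0.le hp hq'_mem hq_mem hq'.le⟩, rfl, ?_, ?_, ?_⟩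
  · gcongr
    linarith
  · rw [div_le_one (by linarith)]
    linarith
  · gcongr
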